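/- arXiv:1503.02797 — 3 statements merged into one kernel-verified Lean document; each statement's English description precedes it below -/
import Mathlib

section
/- Let F be a field, let f(z) = ∑_{j≥0} c_j z^j be a formal power series over F, and suppose there exist integers ℓ > k ≥ 1 such that H_ℓ(f)·H_k(f) ≠ 0. Then the Padé approximant [k−1/k]_f(z) exists; more precisely, there exist polynomials P(z), Q(z) over F with deg P ≤ k−1, deg Q ≤ k and Q(0) ≠ 0, a nonzero element h_k of F, and an integer k' with k ≤ k' < ℓ, such that f(z) − P(z)/Q(z) = h_k·z^{k+k'} + O(z^{k+k'+1}) (i.e. the power series f − P/Q has order exactly k + k'). -/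
/-- The irrationality exponent of a real number: the supremum of all real numbers
`μ` such that `|ξ - p/q| < 1/q^μ` has infinitely many rational solutions `p/q`. -/
noncomputable def irrationalityExponent (ξ : ℝ) : ℝ :=
  sSup {μ : ℝ | {pq : ℤ × ℕ | 0 < pq.2 ∧
    |ξ - (pq.1 : ℝ) / (pq.2 : ℝ)| < 1 / (pq.2 : ℝ) ^ μ}.Infinite}

/-- The `n`-th Hankel determinant of the sequence `c`: `det (c (i+j))_{0 ≤ i,j ≤ n-1}`
(equal to `1` for `n = 0`). -/
noncomputable def hankel {R : Type*} [CommRing R] (c : ℕ → R) (n : ℕ) : R :=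
  Matrix.det (Matrix.of fun i j : Fin n => c (i.1 + j.1))


/-- Theorem 3.1. If `H_ℓ(f) · H_k(f) ≠ 0` for some `ℓ > k ≥ 1`, then the
Padé approximant `[k-1/k]_f = P/Q` exists and `f - P/Q = h_k z^{k+k'} + O(z^{k+k'+1})`
for some nonzero `h_k` and some `k ≤ k' < ℓ`. -/
theorem pade_approximant_of_hankel_ne_zero {F : Type*} [Field F] (c : ℕ → F)
    (k l : ℕ) (hk : 1 ≤ k) (hkl : k < l)
    (hH : hankel c l * hankel c k ≠ 0) :
    ∃ (P Q : Polynomial F) (h : F) (k' : ℕ),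
      P.natDegree ≤ k - 1 ∧ Q.natDegree ≤ k ∧ Q.coeff 0 ≠ 0 ∧
      h ≠ 0 ∧ k ≤ k' ∧ k' < l ∧
      PowerSeries.coeff (R := F) (k + k')
        (PowerSeries.mk c - (P : PowerSeries F) * (Q : PowerSeries F)⁻¹) = h ∧
      (PowerSeries.mk c - (P : PowerSeries F) * (Q : PowerSeries F)⁻¹).order
        = (k + k' : ℕ) := by
  classical
  have hHl : hankel c l ≠ 0 := left_ne_zero_of_mul hH
  have hHk : hankel c k ≠ 0 := right_ne_zero_of_mul hH
  set A : Matrix (Fin k) (Fin k) F := (Matrix.of fun i j : Fin k => c (i.1 + j.1)) with hA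
  have hAdet : IsUnit A.det := isUnit_iff_ne_zero.2 hHk
  set v : Fin k → F := A⁻¹.mulVec fun i => -c (k + i.1) with hvdef
  have hv : A.mulVec v = fun i => -c (k + i.1) := by
    rw [hvdef, Matrix.mulVec_mulVec, Matrix.mul_nonsing_inv _ hAdet, Matrix.one_mulVec]
  set u : ℕ → F := (fun j => if h : j < k then v ⟨j, h⟩ else 0) with hu
  set Qc : ℕ → F := (fun m => if m = 0 then 1 else u (k - m)) with hQc
  set Q : Polynomial F := ∑ m ∈ Finset.range (k+1), Polynomial.C (Qc m) * Polynomial.X ^ m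
    with hQdef
  have hQcoeff : ∀ n, Q.coeff n = if n < k + 1 then Qc n else 0 := by
    intro n
    rw [hQdef, Polynomial.finset_sum_coeff]
    simp_rw [Polynomial.coeff_C_mul, Polynomial.coeff_X_pow, mul_ite, mul_one, mul_zero]
    rw [Finset.sum_ite_eq (Finset.range (k+1)) n Qc]
    simp [Finset.mem_range]
  have hQd : Q.natDegree ≤ k := by
    apply Polynomial.natDegree_le_iff_coeff_eq_zero.2
    intro m hm
    rw [hQcoeff, if_neg (by omega)]
  have hQ0 : Q.coeff 0 = 1 := by
    rw [hQcoeff, if_pos (by omega)]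
    simp [hQc]
  set g : PowerSeries F := PowerSeries.mk c * (Q : PowerSeries F) with hgdef
  have hgen : ∀ n, k ≤ n →
      PowerSeries.coeff (R := F) n g = ∑ m ∈ Finset.range (k+1), Q.coeff m * c (n - m) := by
    intro n hn
    rw [hgdef, mul_comm, PowerSeries.coeff_mul, Finset.Nat.sum_antidiagonal_eq_sum_range_succ_mk]
    rw [← Finset.sum_subset (Finset.range_subset_range.2 (show k+1 ≤ n+1 by omega))
        (fun m hm hm2 => by
          simp only [Finset.mem_range] at hm hm2
          rw [Polynomial.coeff_coe, hQcoeff, if_neg (by omega), zero_mul])]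
    simp [Polynomial.coeff_coe]
  have hg : ∀ n, k ≤ n →
      PowerSeries.coeff (R := F) n g = c n + ∑ j ∈ Finset.range k, u j * c (n - k + j) := by
    intro n hn
    rw [hgen n hn, Finset.sum_range_succ']
    have h0 : Q.coeff 0 * c (n - 0) = c n := by rw [hQ0, one_mul, Nat.sub_zero]
    rw [h0, add_comm]
    congr 1
    rw [← Finset.sum_range_reflect (fun j => u j * c (n - k + j)) k]
    apply Finset.sum_congr rfl
    intro m hm
    simp only [Finset.mem_range] at hm
    have e1 : k - (m+1) = k - 1 - m := by omega
    have e2 : n - (m+1) = n - k + (k - 1 - m) := by omega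
    rw [hQcoeff, if_pos (by omega), hQc]
    simp only [Nat.succ_ne_zero, if_false]
    rw [e1, e2]
  have hg0 : ∀ i, i < k → PowerSeries.coeff (R := F) (k + i) g = 0 := by
    intro i hi
    rw [hg (k+i) (by omega)]
    have sum1 : ∑ j ∈ Finset.range k, u j * c (k + i - k + j)
        = ∑ j ∈ Finset.range k, c (i + j) * u j := by
      apply Finset.sum_congr rfl
      intro j hj
      have : k + i - k + j = i + j := by omega
      rw [this, mul_comm]
    have sum2 : ∑ j ∈ Finset.range k, c (i + j) * u j = (A.mulVec v) ⟨i, hi⟩ := by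
      rw [Matrix.mulVec, dotProduct,
        ← Fin.sum_univ_eq_sum_range (fun j => c (i + j) * u j) k]
      apply Finset.sum_congr rfl
      intro j _
      rw [hu]
      simp [hA, Matrix.of_apply, dif_pos j.2]
    rw [sum1, sum2, hv]
    simp
  -- there is a nonzero coefficient of g in [k, k+l)
  have hex : ∃ n, k ≤ n ∧ n < k + l ∧ PowerSeries.coeff (R := F) n g ≠ 0 := by
    by_contra hcon
    push_neg at hcon
    set B : Matrix (Fin l) (Fin l) F := (Matrix.of fun i j : Fin l => c (i.1 + j.1)) with hB
    have hBdet : IsUnit B.det := isUnit_iff_ne_zero.2 hHl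
    set wn : ℕ → F := (fun j => if j < k + 1 then Q.coeff (k - j) else 0) with hwn
    set w : Fin l → F := (fun j => wn j.1) with hw
    have hBw : B.mulVec w = 0 := by
      funext i
      have step1 : (B.mulVec w) i = ∑ j ∈ Finset.range l, c (i.1 + j) * wn j := by
        rw [Matrix.mulVec, dotProduct,
          ← Fin.sum_univ_eq_sum_range (fun j => c (i.1 + j) * wn j) l]
        rfl
      have step2 : ∑ j ∈ Finset.range l, c (i.1 + j) * wn j
          = ∑ j ∈ Finset.range (k+1), c (i.1 + j) * wn j := by
        rw [← Finset.sum_subset (Finset.range_subset_range.2 (show k+1 ≤ l by omega))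
          (fun m hm hm2 => by
            simp only [Finset.mem_range] at hm hm2
            rw [hwn]
            simp only [if_neg (show ¬ m < k + 1 by omega), mul_zero])]
      have step3 : ∑ j ∈ Finset.range (k+1), c (i.1 + j) * wn j
          = ∑ m ∈ Finset.range (k+1), Q.coeff m * c (i.1 + k - m) := by
        rw [← Finset.sum_range_reflect (fun m => Q.coeff m * c (i.1 + k - m)) (k+1)]
        apply Finset.sum_congr rfl
        intro j hj
        simp only [Finset.mem_range] at hj
        rw [hwn]
        simp only [if_pos hj]
        have e1 : k + 1 - 1 - j = k - j := by omega
        have e2 : i.1 + k - (k - j) = i.1 + j := by omega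
        rw [e1, e2, mul_comm]
      rw [step1, step2, step3, ← hgen (i.1 + k) (by omega),
        hcon (i.1 + k) (by omega) (by omega)]
      rfl
    have hw0 : w = 0 := by
      have h2 := congrArg (fun x => B⁻¹.mulVec x) hBw
      simpa [Matrix.mulVec_mulVec, Matrix.nonsing_inv_mul B hBdet, Matrix.one_mulVec,
        Matrix.mulVec_zero] using h2
    have hwk : w ⟨k, hkl⟩ = 1 := by
      rw [hw]
      simp only
      rw [hwn]
      simp only [if_pos (show k < k + 1 by omega), Nat.sub_self, hQ0]
    rw [hw0] at hwk
    simp at hwk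
  set P : Polynomial F := PowerSeries.trunc k g with hP
  have hPdeg : P.natDegree ≤ k - 1 := by
    have h1 := PowerSeries.natDegree_trunc_lt g (k-1)
    have hk1 : k - 1 + 1 = k := by omega
    rw [hk1] at h1
    rw [hP]
    omega
  set e' : PowerSeries F := g - (P : PowerSeries F) with he'
  have h1 : ∀ n, n < k → PowerSeries.coeff (R := F) n e' = 0 := by
    intro n hn
    rw [he', map_sub, Polynomial.coeff_coe, hP, PowerSeries.coeff_trunc, if_pos hn, sub_self]
  have h2 : ∀ n, k ≤ n → PowerSeries.coeff (R := F) n e' = PowerSeries.coeff (R := F) n g := by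
    intro n hn
    rw [he', map_sub, Polynomial.coeff_coe, hP, PowerSeries.coeff_trunc,
      if_neg (by omega), sub_zero]
  obtain ⟨n₀, hn₀k, hn₀l, hn₀⟩ := hex
  have he'n₀ : PowerSeries.coeff (R := F) n₀ e' ≠ 0 := by rw [h2 n₀ hn₀k]; exact hn₀
  have hordle : e'.order ≤ n₀ := PowerSeries.order_le n₀ he'n₀
  have hordne : e'.order ≠ ⊤ := by
    intro htop
    rw [htop] at hordle
    exact absurd (top_le_iff.1 hordle) (by simp)
  obtain ⟨N, hN⟩ := WithTop.ne_top_iff_exists.1 hordne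
  have hN' : e'.order = (N : ℕ∞) := hN.symm
  obtain ⟨hNcoeff, hNall⟩ := PowerSeries.order_eq_nat.1 hN'
  have hNk : k ≤ N := by
    by_contra hc
    exact hNcoeff (h1 N (by omega))
  have hgN : PowerSeries.coeff (R := F) N g ≠ 0 := by rw [← h2 N hNk]; exact hNcoeff
  have hN2k : 2 * k ≤ N := by
    by_contra hc
    have hNk' : N = k + (N - k) := by omega
    have := hg0 (N - k) (by omega)
    rw [← hNk'] at this
    exact hgN this
  have hNl : N < k + l := by
    rw [hN'] at hordle
    have : N ≤ n₀ := by exact_mod_cast hordle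
    omega
  have hQ0' : PowerSeries.constantCoeff (R := F) (Q : PowerSeries F) ≠ 0 := by
    rw [← PowerSeries.coeff_zero_eq_constantCoeff_apply, Polynomial.coeff_coe, hQ0]
    exact one_ne_zero
  have hQinv : (Q : PowerSeries F) * (Q : PowerSeries F)⁻¹ = 1 :=
    PowerSeries.mul_inv_cancel _ hQ0'
  have hE : PowerSeries.mk c - (P : PowerSeries F) * (Q : PowerSeries F)⁻¹
      = e' * (Q : PowerSeries F)⁻¹ := by
    rw [he', hgdef, sub_mul, mul_assoc, hQinv, mul_one]
  have hordinv : ((Q : PowerSeries F)⁻¹).order = (0 : ℕ) := by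
    apply PowerSeries.order_eq_nat.2
    constructor
    · rw [PowerSeries.coeff_zero_eq_constantCoeff_apply, PowerSeries.constantCoeff_inv]
      exact inv_ne_zero hQ0'
    · intro i hi
      omega
  have hordE : (PowerSeries.mk c - (P : PowerSeries F) * (Q : PowerSeries F)⁻¹).order
      = (N : ℕ∞) := by
    rw [hE, PowerSeries.order_mul, hN', hordinv]
    simp
  obtain ⟨hEcoeff, -⟩ := PowerSeries.order_eq_nat.1 hordE
  refine ⟨P, Q, PowerSeries.coeff (R := F) N
    (PowerSeries.mk c - (P : PowerSeries F) * (Q : PowerSeries F)⁻¹), N - k,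
    hPdeg, hQd, by rw [hQ0]; exact one_ne_zero, hEcoeff, by omega, by omega, ?_, ?_⟩
  · have hkN : k + (N - k) = N := by omega
    rw [hkN]
  · have hkN : k + (N - k) = N := by omega
    rw [hkN]
    exact hordE
end

section
/- Let α, β ≥ 0 be integers with β ≠ α + 1. Then the quadratic polynomial P(t) = z^{2^α}·(1 + z^{2^β})·t² + (1 + z^{2^β})·t + 1, viewed as a polynomial in t over the field F_2(z) of rational functions over the two-element field, has no root in F_2(z). Consequently, the power series F(z) = ∑_{n,j≥0} z^{j·2^{n+β} + 2^{n+α} − 2^α} ∈ F_2[[z]] (the reduction modulo 2 of F_{α,β}), which satisfies P(F(z)) = 0, is not a rational function over F_2. -/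
/-- The reduction modulo `2` of the power series
`F_{α,β}(z) = ∑_{n,j ≥ 0} (-1)^j z^{j·2^{n+β} + 2^{n+α} - 2^α}`: the coefficient of `z^m`
is the number (mod 2) of pairs `(n, j)` with `j·2^{n+β} + 2^{n+α} - 2^α = m`. -/
noncomputable def Fmod2 (α β : ℕ) : PowerSeries (ZMod 2) :=
  PowerSeries.mk fun m =>
    ((Nat.card {p : ℕ × ℕ // p.2 * 2 ^ (p.1 + β) + 2 ^ (p.1 + α) - 2 ^ α = m} : ℕ) : ZMod 2)

open Polynomial

abbrev R2 := Polynomial (ZMod 2)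

lemma unit_eq_one (u : R2) (h : IsUnit u) : u = 1 := by
  obtain ⟨r, hr, rfl⟩ := Polynomial.isUnit_iff.mp h
  have : r = 1 := by
    fin_cases r
    · exact absurd hr (show ¬IsUnit (0 : ZMod 2) from not_isUnit_zero)
    · rfl
  simp [this]

lemma onePlus (s : ℕ) : ((1 + X) ^ 2 ^ s : R2) = 1 + X ^ 2 ^ s := by
  rw [add_pow_char_pow]; simp

lemma primeY : Prime (1 + X : R2) := by
  apply Polynomial.prime_of_degree_eq_one
  have : (1 + X : R2) = X + C 1 := by simp [add_comm]
  rw [this, Polynomial.degree_X_add_C]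

lemma assoc_eq {u v : R2} (h : Associated u v) : u = v := by
  obtain ⟨c, rfl⟩ := h
  rw [unit_eq_one c c.isUnit, mul_one]

lemma yne : (1 + X : R2) ≠ 0 := by
  intro h
  have := congrArg (Polynomial.eval 0) h
  simp at this

lemma yevalone : Polynomial.eval 1 (1 + X : R2) = 0 := by simp [Polynomial.eval_add]; decide

lemma ypow_inj {k l : ℕ} (h : ((1+X:R2))^k = (1+X:R2)^l) : k = l := by
  have := congrArg Polynomial.natDegree h
  have hy : (1 + X : R2).natDegree = 1 := by
    have : (1 + X : R2) = X + C 1 := by simp [add_comm]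
    rw [this, Polynomial.natDegree_X_add_C]
  rwa [Polynomial.natDegree_pow, Polynomial.natDegree_pow, hy, mul_one, mul_one] at this

lemma case_eq_contra (α β k : ℕ) (hne : β ≠ α + 1) (h2k : 2*k = 2^β)
    (hyk : (1+X:R2)^k = (1+X:R2)^(2^α)) : False := by
  have hk := ypow_inj hyk
  have : (2:ℕ)^β = 2^(α+1) := by rw [pow_succ]; omega
  exact hne (Nat.pow_right_injective (by norm_num) this)

lemma yevalzero : Polynomial.eval 0 (1 + X : R2) = 1 := by simp

lemma key_poly (α β : ℕ) (hne : β ≠ α + 1) (a b : R2) (hb : b ≠ 0) (hco : IsCoprime a b)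
    (E : X ^ 2 ^ α * (1 + X ^ 2 ^ β) * a ^ 2 + (1 + X ^ 2 ^ β) * a * b + b ^ 2 = 0) :
    False := by
  have h2 : (2 : R2) = 0 := CharTwo.two_eq_zero
  have h11 : (1:ZMod 2) + 1 = 0 := by decide
  set y : R2 := 1 + X with hy
  rw [← onePlus] at E
  -- a is a unit, hence 1
  have hadvd : a ∣ b * b :=
    ⟨X ^ 2 ^ α * y ^ 2 ^ β * a + y ^ 2 ^ β * b, by linear_combination -E + (b*b) * h2⟩
  have ha1 : a = 1 := unit_eq_one a ((hco.mul_right hco).isUnit_of_dvd hadvd)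
  subst ha1
  rw [one_pow, mul_one, mul_one] at E
  -- b divides X^(2^α) * y^(2^β)
  have hbdvd : b ∣ X ^ 2 ^ α * y ^ 2 ^ β :=
    ⟨y ^ 2 ^ β + b, by linear_combination E - (b * y ^ 2 ^ β + b * b) * h2⟩
  obtain ⟨d₁, d₂, hd₁, hd₂, rfl⟩ := exists_dvd_and_dvd_of_dvd_mul hbdvd
  obtain ⟨m, -, hm⟩ := (dvd_prime_pow Polynomial.prime_X _).mp hd₁
  obtain ⟨k, -, hk⟩ := (dvd_prime_pow primeY _).mp hd₂
  rw [assoc_eq hm, assoc_eq hk] at E hb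
  have E2 : X ^ 2 ^ α * y ^ 2 ^ β + X ^ m * y ^ (2 ^ β + k) + X ^ (2*m) * y ^ (2*k) = 0 := by
    linear_combination E
  have hb2 : (1:ℕ) ≤ 2 ^ β := Nat.one_le_two_pow
  rcases Nat.lt_trichotomy (2*k) (2^β) with hlt | heq | hgt
  · -- 2k < 2^β
    obtain ⟨d, hd, hd0⟩ : ∃ d, 2^β = 2*k + d ∧ d ≠ 0 := ⟨2^β - 2*k, by omega, by omega⟩
    rw [hd] at E2
    have E3 : y^(2*k) * (X^(2^α) * y^d + X^m * y^(d+k) + X^(2*m)) = 0 := by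
      linear_combination E2
    have Einner := (mul_eq_zero.mp E3).resolve_left (pow_ne_zero _ yne)
    have hdk : d + k ≠ 0 := by omega
    have := congrArg (Polynomial.eval 1) Einner
    simp [hy, yevalone, zero_pow, h11, hd0, hdk] at this
  · -- 2k = 2^β
    have hk0 : k ≠ 0 := by omega
    rw [← heq] at E2
    have E3 : y^(2*k) * (X^(2^α) + X^m * y^k + X^(2*m)) = 0 := by
      linear_combination E2
    have E4 := (mul_eq_zero.mp E3).resolve_left (pow_ne_zero _ yne)
    have hxy : (y:R2)^(2^α) = 1 + X^(2^α) := onePlus α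
    rcases Nat.lt_trichotomy m (2^α) with hm | hm | hm
    · rcases Nat.eq_zero_or_pos m with hm0 | hm0
      · subst hm0
        have hyk : y^k = y^(2^α) := by
          linear_combination E4 - hxy - (X^(2^α) + 1) * h2
        exact case_eq_contra α β k hne heq hyk
      · obtain ⟨c, hc, hc0⟩ : ∃ c, 2^α = m + c ∧ c ≠ 0 := ⟨2^α - m, by omega, by omega⟩
        rw [hc] at E4
        have E5 : X^m * (X^c + y^k + X^m) = 0 := by linear_combination E4
        have Einner := (mul_eq_zero.mp E5).resolve_left (pow_ne_zero _ Polynomial.X_ne_zero)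
        have hm0' : m ≠ 0 := by omega
        have := congrArg (Polynomial.eval 0) Einner
        simp [hy, yevalzero, zero_pow, hc0, hm0'] at this
    · rw [hm] at E4
      have E5 : X^(2^α) * (1 + y^k + X^(2^α)) = 0 := by linear_combination E4
      have Einner := (mul_eq_zero.mp E5).resolve_left (pow_ne_zero _ Polynomial.X_ne_zero)
      have hyk : y^k = y^(2^α) := by
        linear_combination Einner - hxy - (X^(2^α) + 1) * h2
      exact case_eq_contra α β k hne heq hyk
    · obtain ⟨c, hc, hc0⟩ : ∃ c, m = 2^α + c ∧ c ≠ 0 := ⟨m - 2^α, by omega, by omega⟩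
      rw [hc] at E4
      have E5 : X^(2^α) * (1 + X^c * y^k + X^(2^α + 2*c)) = 0 := by linear_combination E4
      have Einner := (mul_eq_zero.mp E5).resolve_left (pow_ne_zero _ Polynomial.X_ne_zero)
      have hac : 2^α + 2*c ≠ 0 := by omega
      have := congrArg (Polynomial.eval 0) Einner
      simp [hy, yevalzero, zero_pow, hc0, hac] at this
  · -- 2k > 2^β
    have hk0 : k ≠ 0 := by omega
    obtain ⟨e, he, he0⟩ : ∃ e, 2*k = 2^β + e ∧ e ≠ 0 := ⟨2*k - 2^β, by omega, by omega⟩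
    rw [he] at E2
    have E3 : y^(2^β) * (X^(2^α) + X^m * y^k + X^(2*m) * y^e) = 0 := by
      linear_combination E2
    have Einner := (mul_eq_zero.mp E3).resolve_left (pow_ne_zero _ yne)
    have := congrArg (Polynomial.eval 1) Einner
    simp [hy, yevalone, zero_pow, h11, hk0, he0] at this

lemma part1 (α β : ℕ) (hne : β ≠ α + 1) :
    ∀ t : RatFunc (ZMod 2),
      RatFunc.X ^ 2 ^ α * (1 + RatFunc.X ^ 2 ^ β) * t ^ 2
        + (1 + RatFunc.X ^ 2 ^ β) * t + 1 ≠ 0 := by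
  intro t ht
  have hb : t.denom ≠ 0 := t.denom_ne_zero
  have hco := t.isCoprime_num_denom
  have hre := t.num_div_denom
  set a := t.num with ha
  set b := t.denom with hbdef
  have hbne : algebraMap (Polynomial (ZMod 2)) (RatFunc (ZMod 2)) b ≠ 0 :=
    RatFunc.algebraMap_ne_zero hb
  rw [← hre] at ht
  field_simp at ht
  have hpoly : (X ^ 2 ^ α * (1 + X ^ 2 ^ β) * a ^ 2 + (1 + X ^ 2 ^ β) * a * b + b ^ 2) * b = 0 := by
    apply RatFunc.algebraMap_injective (ZMod 2)
    rw [map_zero]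
    simp only [map_add, map_mul, map_pow, map_one, RatFunc.algebraMap_X]
    linear_combination (algebraMap (Polynomial (ZMod 2)) (RatFunc (ZMod 2)) b) * ht
  exact key_poly α β hne a b hb hco ((mul_eq_zero.mp hpoly).resolve_right hb)

lemma pred_bounds {α β m n j : ℕ} (h : j * 2 ^ (n + β) + 2 ^ (n + α) - 2 ^ α = m) :
    n ≤ m ∧ j ≤ m := by
  have e1 : (2^n - 1) * 2^α = 2^(n+α) - 2^α := by rw [tsub_mul, one_mul, ← pow_add]
  have e2 : 2^n - 1 ≤ (2^n - 1) * 2^α :=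
    Nat.le_mul_of_pos_right _ (Nat.two_pow_pos α)
  have e3 : n < 2^n := Nat.lt_two_pow_self
  have e4 : 2^α ≤ 2^(n+α) := Nat.pow_le_pow_right (by norm_num) (Nat.le_add_left α n)
  have e5 : j ≤ j * 2^(n+β) := Nat.le_mul_of_pos_right _ (Nat.two_pow_pos _)
  omega

instance predFinite (α β m : ℕ) :
    Finite {p : ℕ × ℕ // p.2 * 2 ^ (p.1 + β) + 2 ^ (p.1 + α) - 2 ^ α = m} := by
  apply Finite.of_injective
    (fun p : {p : ℕ × ℕ // p.2 * 2 ^ (p.1 + β) + 2 ^ (p.1 + α) - 2 ^ α = m} =>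
      ((⟨p.1.1, Nat.lt_succ_of_le (pred_bounds p.2).1⟩ : Fin (m+1)),
       (⟨p.1.2, Nat.lt_succ_of_le (pred_bounds p.2).2⟩ : Fin (m+1))))
  rintro ⟨⟨n1, j1⟩, h1⟩ ⟨⟨n2, j2⟩, h2⟩ h
  simp only [Prod.mk.injEq, Fin.mk.injEq] at h
  simp [h.1, h.2]

lemma coeff_sq (f : PowerSeries (ZMod 2)) (m : ℕ) :
    PowerSeries.coeff m (f ^ 2)
      = if m % 2 = 0 then PowerSeries.coeff (m / 2) f else 0 := by
  classical
  rw [pow_two, PowerSeries.coeff_mul]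
  rw [← Finset.sum_filter_add_sum_filter_not (Finset.HasAntidiagonal.antidiagonal m)
    (fun p : ℕ × ℕ => p.1 = p.2)]
  have hzero : (∑ p ∈ (Finset.HasAntidiagonal.antidiagonal m).filter (fun p : ℕ × ℕ => ¬ p.1 = p.2),
      PowerSeries.coeff p.1 f * PowerSeries.coeff p.2 f) = 0 := by
    apply Finset.sum_involution (fun p _ => (p.2, p.1))
    · intro p hp
      have : ∀ x y : ZMod 2, x * y + y * x = 0 := by decide
      exact this _ _
    · rintro ⟨x, y⟩ hp _ hc
      simp only [Finset.mem_filter] at hp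
      simp only [Prod.mk.injEq] at hc
      exact hp.2 hc.2
    · intro p hp
      simp only [Finset.mem_filter, Finset.HasAntidiagonal.mem_antidiagonal] at hp ⊢
      omega
    · intro p hp
      rfl
  rw [hzero, add_zero]
  have hfilter : (Finset.HasAntidiagonal.antidiagonal m).filter (fun p : ℕ × ℕ => p.1 = p.2)
      = if m % 2 = 0 then {(m/2, m/2)} else ∅ := by
    split_ifs with h
    · ext ⟨i, j⟩
      simp only [Finset.mem_filter, Finset.HasAntidiagonal.mem_antidiagonal, Finset.mem_singleton,
        Prod.mk.injEq]
      omega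
    · ext ⟨i, j⟩
      simp only [Finset.mem_filter, Finset.HasAntidiagonal.mem_antidiagonal, Finset.notMem_empty,
        iff_false, not_and]
      omega
  rw [hfilter]
  split_ifs with h
  · rw [Finset.sum_singleton]
    have : ∀ x : ZMod 2, x * x = x := by decide
    exact this _
  · simp

lemma Fmod2_sq (α β : ℕ) : Fmod2 α β ^ 2 = Fmod2 (α+1) (β+1) := by
  ext m
  rw [coeff_sq]
  simp only [Fmod2, PowerSeries.coeff_mk]
  have e3 : (2:ℕ)^(α+1) = 2^α * 2 := pow_succ 2 α
  split_ifs with h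
  · apply congrArg (fun k : ℕ => (k : ZMod 2))
    apply Nat.card_congr
    apply Equiv.subtypeEquivRight
    rintro ⟨n, j⟩
    simp only
    have e5 : j * 2^(n+(β+1)) = 2 * (j * 2^(n+β)) := by
      rw [show n+(β+1) = (n+β)+1 from rfl, pow_succ]; ring
    have e6 : (2:ℕ)^(n+(α+1)) = 2 * 2^(n+α) := by
      rw [show n+(α+1) = (n+α)+1 from rfl, pow_succ]; ring
    have e4 : (2:ℕ)^α ≤ 2^(n+α) := Nat.pow_le_pow_right (by norm_num) (Nat.le_add_left α n)
    omega
  · haveI : IsEmpty {p : ℕ × ℕ // p.2 * 2 ^ (p.1 + (β+1)) + 2 ^ (p.1 + (α+1)) - 2 ^ (α+1) = m} := by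
      constructor
      rintro ⟨⟨n, j⟩, hp⟩
      simp only at hp
      have e5 : j * 2^(n+(β+1)) = 2 * (j * 2^(n+β)) := by
        rw [show n+(β+1) = (n+β)+1 from rfl, pow_succ]; ring
      have e6 : (2:ℕ)^(n+(α+1)) = 2 * 2^(n+α) := by
        rw [show n+(α+1) = (n+α)+1 from rfl, pow_succ]; ring
      have e4 : (2:ℕ)^α ≤ 2^(n+α) := Nat.pow_le_pow_right (by norm_num) (Nat.le_add_left α n)
      omega
    rw [Nat.card_of_isEmpty, Nat.cast_zero]

noncomputable def Sser (β : ℕ) : PowerSeries (ZMod 2) :=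
  PowerSeries.mk fun m => if 2^β ∣ m then 1 else 0

lemma oneAdd_mul_S (β : ℕ) : (1 + PowerSeries.X ^ 2^β) * Sser β = 1 := by
  ext m
  rw [add_mul, one_mul, map_add, PowerSeries.coeff_X_pow_mul']
  simp only [Sser, PowerSeries.coeff_mk, PowerSeries.coeff_one]
  have hpos : 0 < 2^β := Nat.two_pow_pos β
  by_cases hm : m = 0
  · subst hm
    simp [Nat.not_le.mpr hpos]
  · simp only [hm, if_neg hm]
    by_cases hd : 2^β ∣ m
    · have hle : 2^β ≤ m := Nat.le_of_dvd (by omega) hd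
      have hd2 : 2^β ∣ m - 2^β := Nat.dvd_sub hd dvd_rfl
      rw [if_pos hd, if_pos hle, if_pos hd2]
      decide
    · rw [if_neg hd, zero_add]
      by_cases hle : 2^β ≤ m
      · have hdd : ¬ 2^β ∣ m - 2^β := by
          intro hdd
          have h3 : 2^β ∣ (m - 2^β) + 2^β := Nat.dvd_add hdd dvd_rfl
          rw [Nat.sub_add_cancel hle] at h3
          exact hd h3
        rw [if_pos hle, if_neg hdd]
        simp
      · rw [if_neg hle]
        simp

lemma card_split {γ : Type*} (P Q : γ → Prop) [Finite {x // P x}] :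
    Nat.card {x // P x} = Nat.card {x // P x ∧ Q x} + Nat.card {x // P x ∧ ¬ Q x} := by
  classical
  haveI : Finite {a : {x // P x} // Q a.1} := Subtype.finite
  haveI : Finite {a : {x // P x} // ¬ Q a.1} := Subtype.finite
  calc Nat.card {x // P x}
      = Nat.card ({a : {x // P x} // Q a.1} ⊕ {a : {x // P x} // ¬ Q a.1}) :=
        (Nat.card_congr (Equiv.sumCompl (fun a : {x // P x} => Q a.1))).symm
    _ = Nat.card {a : {x // P x} // Q a.1} + Nat.card {a : {x // P x} // ¬ Q a.1} :=
        Nat.card_sum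
    _ = Nat.card {x // P x ∧ Q x} + Nat.card {x // P x ∧ ¬ Q x} := by
        rw [Nat.card_congr (Equiv.subtypeSubtypeEquivSubtypeInter P Q),
            Nat.card_congr (Equiv.subtypeSubtypeEquivSubtypeInter P (fun x => ¬ Q x))]

lemma Fmod2_rec (α β : ℕ) :
    Fmod2 α β = Sser β + PowerSeries.X ^ 2^α * Fmod2 (α+1) (β+1) := by
  ext m
  rw [map_add, PowerSeries.coeff_X_pow_mul']
  simp only [Fmod2, Sser, PowerSeries.coeff_mk]
  have hsplit := card_split
    (fun p : ℕ × ℕ => p.2 * 2 ^ (p.1 + β) + 2 ^ (p.1 + α) - 2 ^ α = m) (fun p => p.1 = 0)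
  rw [hsplit, Nat.cast_add]
  congr 1
  · -- n = 0 part
    have he : {p : ℕ × ℕ // (p.2 * 2 ^ (p.1 + β) + 2 ^ (p.1 + α) - 2 ^ α = m) ∧ p.1 = 0}
        ≃ {j : ℕ // j * 2^β = m} :=
      { toFun := fun p => ⟨p.1.2, by
          obtain ⟨⟨n, j⟩, hp, hn⟩ := p
          simp only at hp hn ⊢
          subst hn
          simpa using hp⟩
        invFun := fun j => ⟨(0, j.1), by
          obtain ⟨j, hj⟩ := j
          refine ⟨?_, rfl⟩
          simpa using hj⟩
        left_inv := by
          rintro ⟨⟨n, j⟩, hp, hn⟩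
          simp only at hn
          apply Subtype.ext
          simp [hn]
        right_inv := fun j => rfl }
    rw [Nat.card_congr he]
    by_cases hd : 2^β ∣ m
    · obtain ⟨c, rfl⟩ := hd
      haveI : Nonempty {j : ℕ // j * 2^β = 2^β * c} := ⟨⟨c, mul_comm c _⟩⟩
      haveI : Subsingleton {j : ℕ // j * 2^β = 2^β * c} := ⟨by
        rintro ⟨j1, h1⟩ ⟨j2, h2⟩
        apply Subtype.ext
        exact Nat.eq_of_mul_eq_mul_right (Nat.two_pow_pos β) (h1.trans h2.symm)⟩
      rw [Nat.card_unique, if_pos ⟨c, rfl⟩, Nat.cast_one]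
    · haveI : IsEmpty {j : ℕ // j * 2^β = m} :=
        ⟨by rintro ⟨j, hj⟩; exact hd ⟨j, by rw [← hj, mul_comm]⟩⟩
      rw [Nat.card_of_isEmpty, if_neg hd, Nat.cast_zero]
  · -- n ≥ 1 part
    by_cases hα : 2^α ≤ m
    · rw [if_pos hα]
      apply congrArg (fun k : ℕ => (k : ZMod 2))
      apply Nat.card_congr
      exact
        { toFun := fun p => ⟨(p.1.1 - 1, p.1.2), by
            obtain ⟨⟨n, j⟩, hp, hn⟩ := p
            simp only at hp hn ⊢
            have e1 : n - 1 + (β+1) = n + β := by omega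
            have e2 : n - 1 + (α+1) = n + α := by omega
            rw [e1, e2]
            have e3 : (2:ℕ)^(α+1) = 2^α * 2 := pow_succ 2 α
            have e4 : (2:ℕ)^(α+1) ≤ 2^(n+α) := Nat.pow_le_pow_right (by norm_num) (by omega)
            omega⟩
          invFun := fun q => ⟨(q.1.1 + 1, q.1.2), by
            obtain ⟨⟨n, j⟩, hq⟩ := q
            simp only at hq ⊢
            refine ⟨?_, by omega⟩
            have e1 : n + 1 + β = n + (β+1) := by omega
            have e2 : n + 1 + α = n + (α+1) := by omega
            rw [e1, e2]
            have e3 : (2:ℕ)^(α+1) = 2^α * 2 := pow_succ 2 α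
            have e4 : (2:ℕ)^(α+1) ≤ 2^(n+(α+1)) :=
              Nat.pow_le_pow_right (by norm_num) (by omega)
            omega⟩
          left_inv := by
            rintro ⟨⟨n, j⟩, hp, hn⟩
            simp only at hn
            apply Subtype.ext
            simp only
            rw [Nat.sub_add_cancel (by omega : 1 ≤ n)]
          right_inv := by
            rintro ⟨⟨n, j⟩, hq⟩
            apply Subtype.ext
            simp }
    · rw [if_neg hα]
      haveI : IsEmpty {p : ℕ × ℕ //
          (p.2 * 2 ^ (p.1 + β) + 2 ^ (p.1 + α) - 2 ^ α = m) ∧ ¬ p.1 = 0} := ⟨by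
        rintro ⟨⟨n, j⟩, hp, hn⟩
        simp only at hp hn
        have e3 : (2:ℕ)^(α+1) = 2^α * 2 := pow_succ 2 α
        have e4 : (2:ℕ)^(α+1) ≤ 2^(n+α) := Nat.pow_le_pow_right (by norm_num) (by omega)
        omega⟩
      rw [Nat.card_of_isEmpty, Nat.cast_zero]

lemma two_eq_zero_ps : (2 : PowerSeries (ZMod 2)) = 0 := by
  have h : (2 : PowerSeries (ZMod 2)) = 1 + 1 := by norm_num
  rw [h]
  ext m
  rw [map_add, map_zero]
  have : ∀ x : ZMod 2, x + x = 0 := by decide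
  exact this _

lemma part2' (α β : ℕ) :
    PowerSeries.X ^ 2 ^ α * (1 + PowerSeries.X ^ 2 ^ β) * Fmod2 α β ^ 2
      + (1 + PowerSeries.X ^ 2 ^ β) * Fmod2 α β + 1 = 0 := by
  have h2 := two_eq_zero_ps
  linear_combination (PowerSeries.X ^ (2^α) * (1 + PowerSeries.X ^ (2^β))) * (Fmod2_sq α β)
    + (1 + PowerSeries.X ^ (2^β)) * (Fmod2_rec α β) + oneAdd_mul_S β
    + (PowerSeries.X ^ (2^α) * (1 + PowerSeries.X ^ (2^β)) * (Fmod2 (α+1) (β+1)) + 1) * h2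

lemma part2 (α β : ℕ) :
    ((Polynomial.X ^ 2 ^ α * (1 + Polynomial.X ^ 2 ^ β) :
        Polynomial (ZMod 2)) : PowerSeries (ZMod 2)) * Fmod2 α β ^ 2
      + ((1 + Polynomial.X ^ 2 ^ β : Polynomial (ZMod 2)) : PowerSeries (ZMod 2))
          * Fmod2 α β + 1 = 0 := by
  simp only [Polynomial.coe_mul, Polynomial.coe_add, Polynomial.coe_pow,
    Polynomial.coe_one, Polynomial.coe_X]
  exact part2' α β

lemma part3 (α β : ℕ) (hne : β ≠ α + 1) :
    ¬ ∃ P Q : Polynomial (ZMod 2), IsUnit (Q.coeff 0) ∧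
      (Q : PowerSeries (ZMod 2)) * Fmod2 α β = (P : PowerSeries (ZMod 2)) := by
  rintro ⟨P, Q, hQ, hQF⟩
  have hQ0 : Q ≠ 0 := by
    intro h
    rw [h, Polynomial.coeff_zero, isUnit_zero_iff] at hQ
    exact absurd hQ (by decide)
  have hP2 : (X ^ 2 ^ α * (1 + X ^ 2 ^ β) * P ^ 2 + (1 + X ^ 2 ^ β) * P * Q + Q ^ 2 :
      Polynomial (ZMod 2)) = 0 := by
    rw [← Polynomial.coe_eq_zero_iff]
    push_cast [Polynomial.coe_add, Polynomial.coe_mul, Polynomial.coe_pow,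
      Polynomial.coe_one, Polynomial.coe_X, Polynomial.coe_zero]
    rw [← hQF]
    linear_combination ((Q : PowerSeries (ZMod 2))^2) * part2' α β
  have hq' : algebraMap (Polynomial (ZMod 2)) (RatFunc (ZMod 2)) Q ≠ 0 :=
    RatFunc.algebraMap_ne_zero hQ0
  set t : RatFunc (ZMod 2) :=
    algebraMap (Polynomial (ZMod 2)) (RatFunc (ZMod 2)) P /
      algebraMap (Polynomial (ZMod 2)) (RatFunc (ZMod 2)) Q with htdef
  apply part1 α β hne t
  have expand : RatFunc.X ^ 2 ^ α * (1 + RatFunc.X ^ 2 ^ β) * t ^ 2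
      + (1 + RatFunc.X ^ 2 ^ β) * t + 1
      = algebraMap (Polynomial (ZMod 2)) (RatFunc (ZMod 2))
          (X ^ 2 ^ α * (1 + X ^ 2 ^ β) * P ^ 2 + (1 + X ^ 2 ^ β) * P * Q + Q ^ 2) /
        (algebraMap (Polynomial (ZMod 2)) (RatFunc (ZMod 2)) Q) ^ 2 := by
    rw [htdef]
    simp only [map_add, map_mul, map_pow, map_one, RatFunc.algebraMap_X]
    field_simp
  rw [expand, hP2, map_zero, zero_div]

/-- For `β ≠ α + 1`, the polynomial
`P(t) = z^{2^α}(1 + z^{2^β}) t² + (1 + z^{2^β}) t + 1` has no root in `F₂(z)`; consequently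
the power series `F = F_{α,β} mod 2 ∈ F₂[[z]]`, which satisfies `P(F) = 0`, is not a
rational function over `F₂`. -/

theorem Fmod2_not_rational (α β : ℕ) (hne : β ≠ α + 1) :
    (∀ t : RatFunc (ZMod 2),
      RatFunc.X ^ 2 ^ α * (1 + RatFunc.X ^ 2 ^ β) * t ^ 2
        + (1 + RatFunc.X ^ 2 ^ β) * t + 1 ≠ 0) ∧
    ((Polynomial.X ^ 2 ^ α * (1 + Polynomial.X ^ 2 ^ β) :
        Polynomial (ZMod 2)) : PowerSeries (ZMod 2)) * Fmod2 α β ^ 2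
      + ((1 + Polynomial.X ^ 2 ^ β : Polynomial (ZMod 2)) : PowerSeries (ZMod 2))
          * Fmod2 α β + 1 = 0 ∧
    ¬ ∃ P Q : Polynomial (ZMod 2), IsUnit (Q.coeff 0) ∧
      (Q : PowerSeries (ZMod 2)) * Fmod2 α β = (P : PowerSeries (ZMod 2)) := by
  exact ⟨part1 α β hne, part2 α β, part3 α β hne⟩
end

section
/- Let u be an integer and g(z) a power series with integer coefficients, and let f(z) be the power series with integer coefficients defined by f(z) = 1/(1 − u·z + 2·z²·g(z)). Then for every integer n ≥ 1, the Hankel determinants of f and g satisfy H_n(f) = (−2)^{n−1}·H_{n−1}(g). -/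
theorem hankel_key (c v b : ℕ → ℤ) (hv0 : v 0 = 1)
    (hv2 : ∀ k, v (k + 2) = 2 * b k)
    (hconv : ∀ m : ℕ, ∑ k ∈ Finset.range (m + 1), c k * v (m - k)
      = if m = 0 then (1 : ℤ) else 0) :
    ∀ m : ℕ, hankel c (m + 1) = (-2) ^ m * hankel b m := by
  intro m
  classical
  have hc0 : c 0 = 1 := by simpa [hv0] using hconv 0
  -- tail sum lemma
  have htail : ∀ i j : ℕ, ∑ k ∈ Finset.range (i + 1), v (i - k) * c (k + j)
      = (if i + j = 0 then (1 : ℤ) else 0) - ∑ t ∈ Finset.range j, v (i + j - t) * c t := by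
    intro i j
    have h := hconv (i + j)
    rw [show i + j + 1 = j + (i + 1) by omega, Finset.sum_range_add] at h
    have h2 : ∑ k ∈ Finset.range (i + 1), c (j + k) * v (i + j - (j + k))
        = ∑ k ∈ Finset.range (i + 1), v (i - k) * c (k + j) := by
      refine Finset.sum_congr rfl fun k hk => ?_
      rw [show i + j - (j + k) = i - k by omega, mul_comm, Nat.add_comm j k]
    have h3 : ∑ t ∈ Finset.range j, c t * v (i + j - t)
        = ∑ t ∈ Finset.range j, v (i + j - t) * c t := by
      exact Finset.sum_congr rfl fun t ht => mul_comm _ _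
    rw [h2, h3] at h
    linarith
  set V : Matrix (Fin (m + 1)) (Fin (m + 1)) ℤ :=
    Matrix.of (fun i k : Fin (m + 1) => if (k : ℕ) ≤ (i : ℕ) then v (i - k) else 0) with hV
  set H : Matrix (Fin (m + 1)) (Fin (m + 1)) ℤ :=
    Matrix.of (fun i j : Fin (m + 1) => c (i.1 + j.1)) with hH
  have hkey : ∀ i j : Fin (m + 1),
      (V * H) i j = ∑ k ∈ Finset.range ((i : ℕ) + 1), v ((i : ℕ) - k) * c (k + (j : ℕ)) := by
    intro i j
    rw [Matrix.mul_apply]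
    have e1 : ∀ k : Fin (m + 1), V i k * H k j
        = (fun k : ℕ => (if k ≤ (i : ℕ) then v ((i : ℕ) - k) else 0) * c (k + (j : ℕ))) k := by
      intro k; simp [hV, hH]
    rw [Finset.sum_congr rfl fun k _ => e1 k,
      Fin.sum_univ_eq_sum_range (fun k : ℕ =>
        (if k ≤ (i : ℕ) then v ((i : ℕ) - k) else 0) * c (k + (j : ℕ)))]
    rw [← Finset.sum_subset (Finset.range_subset_range.2 (by omega : (i : ℕ) + 1 ≤ m + 1))
      (fun x hx hx' => by
        have : ¬ x ≤ (i : ℕ) := by simp at hx hx' ⊢; omega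
        simp [this])]
    exact Finset.sum_congr rfl fun k hk => by
      have : k ≤ (i : ℕ) := by simp at hk; omega
      simp [this]
  have hdetV : V.det = 1 := by
    have hbt : V.BlockTriangular OrderDual.toDual := by
      intro p q hpq
      have hlt : (p : ℕ) < (q : ℕ) := hpq
      simp only [hV, Matrix.of_apply]
      rw [if_neg (by omega)]
    rw [Matrix.det_of_lowerTriangular V hbt]
    simp [hV, hv0]
  set G : Matrix (Fin m) (Fin m) ℤ :=
    Matrix.of (fun i j : Fin m => b (i.1 + j.1)) with hG
  set Cm : Matrix (Fin m) (Fin m) ℤ :=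
    Matrix.of (fun t j : Fin m => if (t : ℕ) ≤ (j : ℕ) then c ((j : ℕ) - (t : ℕ)) else 0) with hCm
  have hsub : (V * H).submatrix Fin.succ Fin.succ = (-2 : ℤ) • (G * Cm) := by
    ext i j
    rw [Matrix.submatrix_apply, hkey, Matrix.smul_apply, Matrix.mul_apply]
    have hvi : (Fin.succ i : ℕ) = (i : ℕ) + 1 := rfl
    have hvj : (Fin.succ j : ℕ) = (j : ℕ) + 1 := rfl
    rw [hvi, hvj, htail]
    rw [if_neg (by omega)]
    -- LHS = -∑ t in range (j+1), v (i+1+(j+1)-t) * c t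
    have hL : ∑ t ∈ Finset.range ((j : ℕ) + 1), v ((i : ℕ) + 1 + ((j : ℕ) + 1) - t) * c t
        = ∑ t ∈ Finset.range ((j : ℕ) + 1), 2 * (b ((i : ℕ) + (j : ℕ) - t) * c t) := by
      refine Finset.sum_congr rfl fun t ht => ?_
      have ht' : t ≤ (j : ℕ) := by simp at ht; omega
      rw [show (i : ℕ) + 1 + ((j : ℕ) + 1) - t = ((i : ℕ) + (j : ℕ) - t) + 2 by omega, hv2,
        mul_assoc]
    -- RHS
    have hR : ∑ t : Fin m, G i t * Cm t j
        = ∑ t ∈ Finset.range ((j : ℕ) + 1), b ((i : ℕ) + (j : ℕ) - t) * c t := by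
      have e1 : ∀ t : Fin m, G i t * Cm t j
          = (fun t : ℕ => b ((i : ℕ) + t) * (if t ≤ (j : ℕ) then c ((j : ℕ) - t) else 0)) t := by
        intro t; simp [hG, hCm]
      rw [Finset.sum_congr rfl fun t _ => e1 t,
        Fin.sum_univ_eq_sum_range (fun t : ℕ =>
          b ((i : ℕ) + t) * (if t ≤ (j : ℕ) then c ((j : ℕ) - t) else 0))]
      rw [← Finset.sum_subset (Finset.range_subset_range.2 (by omega : (j : ℕ) + 1 ≤ m))
        (fun x hx hx' => by
          have : ¬ x ≤ (j : ℕ) := by simp at hx hx' ⊢; omega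
          simp [this])]
      rw [← Finset.sum_range_reflect]
      refine Finset.sum_congr rfl fun t ht => ?_
      have ht' : t ≤ (j : ℕ) := by simp at ht; omega
      have e2 : (j : ℕ) + 1 - 1 - t = (j : ℕ) - t := by omega
      have e3 : (j : ℕ) - ((j : ℕ) - t) = t := by omega
      have e4 : (i : ℕ) + ((j : ℕ) - t) = (i : ℕ) + (j : ℕ) - t := by omega
      rw [e2, if_pos (by omega), e3, e4]
    rw [hL, hR, smul_eq_mul, Finset.mul_sum]
    rw [zero_sub, ← Finset.sum_neg_distrib]
    exact Finset.sum_congr rfl fun t ht => by ring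
  have hone : (V * H) 0 0 = 1 := by
    rw [hkey]; simp [hv0, hc0]
  have hcol : ∀ i : Fin (m + 1), i ≠ 0 → (V * H) i 0 = 0 := by
    intro i hi
    rw [hkey, htail]
    have : (i : ℕ) ≠ 0 := fun h => hi (Fin.ext h)
    simp [this]
  have hdet : H.det = ((-2 : ℤ) • (G * Cm)).det := by
    rw [show H.det = (V * H).det by rw [Matrix.det_mul, hdetV, one_mul]]
    rw [Matrix.det_succ_column_zero]
    rw [Finset.sum_eq_single (0 : Fin (m + 1))]
    · rw [hone, Fin.succAbove_zero, hsub]; simp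
    · intro i _ hi; rw [hcol i hi]; ring
    · intro h; exact absurd (Finset.mem_univ _) h
  have hdetC : Cm.det = 1 := by
    have hbt : Cm.BlockTriangular id := by
      intro p q hpq
      have hlt : (q : ℕ) < (p : ℕ) := hpq
      simp [hCm, Nat.not_le.2 hlt, Nat.not_le.2]
      omega
    rw [Matrix.det_of_upperTriangular hbt]
    simp [hCm, hc0]
  show H.det = (-2) ^ m * hankel b m
  rw [hdet, Matrix.det_smul, Matrix.det_mul, hdetC, mul_one, Fintype.card_fin]
  rfl


/-- relation (6.3). If `f(z) = 1/(1 - u z + 2 z² g(z))` in `ℤ[[z]]`, then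
for every `n ≥ 1` one has `H_n(f) = (-2)^{n-1}·H_{n-1}(g)`. -/
theorem hankel_of_inv_one_sub (u : ℤ) (g f : PowerSeries ℤ)
    (hf : f * (1 - PowerSeries.C u * PowerSeries.X
      + 2 * PowerSeries.X ^ 2 * g) = 1) :
    ∀ n : ℕ, 1 ≤ n →
      hankel (fun j => PowerSeries.coeff j f) n
        = (-2) ^ (n - 1) * hankel (fun j => PowerSeries.coeff j g) (n - 1) := by
  intro n hn
  set w : PowerSeries ℤ := 1 - PowerSeries.C u * PowerSeries.X
      + 2 * PowerSeries.X ^ 2 * g with hw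
  have hv0 : PowerSeries.coeff 0 w = 1 := by
    simp [hw, PowerSeries.coeff_one, PowerSeries.coeff_X, mul_assoc,
      PowerSeries.coeff_zero_eq_constantCoeff]
  have hv2 : ∀ k, PowerSeries.coeff (k + 2) w = 2 * PowerSeries.coeff k g := by
    intro k
    have h2 : PowerSeries.coeff (k + 2) (PowerSeries.X ^ 2 * g)
        = PowerSeries.coeff k g := by
      simpa [add_comm] using PowerSeries.coeff_X_pow_mul g 2 k
    have h1 : PowerSeries.coeff (k + 2) (PowerSeries.C u * PowerSeries.X) = 0 := by
      rw [PowerSeries.coeff_C_mul, PowerSeries.coeff_X, if_neg (by omega), mul_zero]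
    rw [hw, map_add, map_sub, PowerSeries.coeff_one, if_neg (by omega), h1, mul_assoc,
      show ((2 : PowerSeries ℤ) = PowerSeries.C 2) by norm_num, PowerSeries.coeff_C_mul, h2]
    ring
  have hconv : ∀ m : ℕ, ∑ k ∈ Finset.range (m + 1),
      PowerSeries.coeff k f * PowerSeries.coeff (m - k) w
      = if m = 0 then (1 : ℤ) else 0 := by
    intro m
    have := congrArg (PowerSeries.coeff m) hf
    rw [PowerSeries.coeff_mul, Finset.Nat.sum_antidiagonal_eq_sum_range_succ_mk] at this
    simpa [PowerSeries.coeff_one] using this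
  obtain ⟨m, rfl⟩ : ∃ m, n = m + 1 := ⟨n - 1, by omega⟩
  simpa using hankel_key (fun j => PowerSeries.coeff j f)
    (fun k => PowerSeries.coeff k w) (fun k => PowerSeries.coeff k g)
    hv0 hv2 hconv m
end
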